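/- arXiv:1110.6832 — 3 statements merged into one kernel-verified Lean document; each statement's English description precedes it below -/
import Mathlib

section
/- Let G=(V,E) be an undirected polymatroidal network with a fractional cut solution ℓ, ℓ(e,u), ℓ(e,v). Let g: V → [0,β] be 1-Lipschitz with respect to dist_ℓ, let 0 ≤ a_0 ≤ a < b ≤ b_0 ≤ β, and for θ let S_θ = {u ∈ V : g(u) < θ}. Suppose that for every edge e = uv belonging to ∪_{θ∈[a,b]} δ(S_θ), both g(u) and g(v) lie in [a_0,b_0]. Then ∫_a^b ν(δ(S_θ)) dθ ≤ 2·Σ_{v: g(v)∈[a_0,b_0]} ρ̂_v(d_v). -/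
open Finset MeasureTheory
open scoped ENNReal Classical

/-- `UWalk ep1 ep2 s t p`: in the undirected graph whose edge `e` has endpoints
`ep1 e` and `ep2 e`, the list of edges `p` forms a walk from `s` to `t`. -/
def UWalk {V E : Type} [DecidableEq V] (ep1 ep2 : E → V) : V → V → List E → Prop
  | s, t, [] => s = t
  | s, t, e :: p => (ep1 e = s ∨ ep2 e = s) ∧
      UWalk ep1 ep2 (if ep1 e = s then ep2 e else ep1 e) t p

/-- The list of vertices visited by an undirected walk starting at `s`. -/
def uwalkVerts {V E : Type} [DecidableEq V] (ep1 ep2 : E → V) : V → List E → List V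
  | s, [] => [s]
  | s, e :: p => s :: uwalkVerts ep1 ep2 (if ep1 e = s then ep2 e else ep1 e) p

/-- A simple undirected path from `s` to `t`. -/
def UIsPath {V E : Type} [DecidableEq V] (ep1 ep2 : E → V) (s t : V) (p : List E) : Prop :=
  UWalk ep1 ep2 s t p ∧ (uwalkVerts ep1 ep2 s p).Nodup

/-- `F` separates `s` and `t`: they lie in different connected components of `G∖F`. -/
def USep {V E : Type} [DecidableEq V] (ep1 ep2 : E → V) (F : Finset E) (s t : V) : Prop :=
  ¬ ∃ p : List E, UWalk ep1 ep2 s t p ∧ ∀ e ∈ p, e ∉ F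

/-- `δ(S)`: the set of edges with exactly one endpoint in `S`. -/
def uvcut {V E : Type} [Fintype E] [DecidableEq V] (ep1 ep2 : E → V) (S : Finset V) :
    Finset E :=
  Finset.univ.filter (fun e => (ep1 e ∈ S ∧ ep2 e ∉ S) ∨ (ep1 e ∉ S ∧ ep2 e ∈ S))

/-- Shortest-path distance (in `ℝ≥0∞`, `⊤` when unreachable) under edge lengths `len`. -/
noncomputable def udist {V E : Type} [DecidableEq V] (ep1 ep2 : E → V) (len : E → ℝ)
    (u v : V) : ℝ≥0∞ :=
  ⨅ p : { p : List E // UWalk ep1 ep2 u v p }, ENNReal.ofReal ((p.1.map len).sum)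

/-- The Lovász extension of `ρ` on the ground set `ground`,
`ρ̂(x) = ∫_0^∞ ρ({e ∈ ground : x e ≥ θ}) dθ` (which agrees with `∫_0^1` when `x ≤ 1`). -/
noncomputable def lovaszExt {E : Type} [Fintype E] (ρ : Finset E → ℝ)
    (ground : Finset E) (x : E → ℝ) : ℝ :=
  ∫ θ in Set.Ioi (0:ℝ), ρ (ground.filter (fun e => θ ≤ x e))

/-- An undirected polymatroidal network: a finite undirected graph together with,
for each node `v`, a polymatroid `rho v` on the set of edges incident to `v`. -/
structure UPolyNet (V E : Type) [Fintype V] [Fintype E] [DecidableEq V] [DecidableEq E] where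
  ep1 : E → V
  ep2 : E → V
  rho : V → Finset E → ℝ
  rho_empty : ∀ v, rho v ∅ = 0
  rho_nonneg : ∀ v A, A ⊆ Finset.univ.filter (fun e => ep1 e = v ∨ ep2 e = v) → 0 ≤ rho v A
  rho_mono : ∀ v A B, A ⊆ B → B ⊆ Finset.univ.filter (fun e => ep1 e = v ∨ ep2 e = v) →
    rho v A ≤ rho v B
  rho_submod : ∀ v A B, A ⊆ Finset.univ.filter (fun e => ep1 e = v ∨ ep2 e = v) →
    B ⊆ Finset.univ.filter (fun e => ep1 e = v ∨ ep2 e = v) →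
    rho v (A ∪ B) + rho v (A ∩ B) ≤ rho v A + rho v B

namespace UPolyNet

variable {V E : Type} [Fintype V] [Fintype E] [DecidableEq V] [DecidableEq E]

/-- The set `δ(v)` of edges incident to `v` (the ground set of `rho v`). -/
def incE (N : UPolyNet V E) (v : V) : Finset E :=
  Finset.univ.filter (fun e => N.ep1 e = v ∨ N.ep2 e = v)

/-- The cost `ν(F)` of the edge cut `F`: the minimum over valid assignments `g` of
the edges of `F` to their endpoints of `Σ_v ρ_v(g⁻¹(v))`. -/
noncomputable def cutCost (N : UPolyNet V E) (F : Finset E) : ℝ :=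
  sInf { c : ℝ | ∃ g : E → V, (∀ e ∈ F, g e = N.ep1 e ∨ g e = N.ep2 e) ∧
    c = ∑ v : V, N.rho v ((N.incE v ∩ F).filter (fun e => g e = v)) }

/-- Total flow on an edge `e`. -/
noncomputable def edgeFlow (N : UPolyNet V E) {ι : Type} [Fintype ι]
    (f : ι → List E → ℝ) (e : E) : ℝ :=
  ∑ i : ι, ∑ᶠ p ∈ {p : List E | e ∈ p}, f i p

/-- The rate of commodity `i`. -/
noncomputable def rate {ι : Type} (f : ι → List E → ℝ) (i : ι) : ℝ :=
  ∑ᶠ p : List E, f i p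

/-- A feasible multicommodity flow for the source-sink pairs `(s i, t i)`. -/
structure IsFlow (N : UPolyNet V E) {ι : Type} [Fintype ι] (s t : ι → V)
    (f : ι → List E → ℝ) : Prop where
  nonneg : ∀ i p, 0 ≤ f i p
  supp : ∀ i p, f i p ≠ 0 → UIsPath N.ep1 N.ep2 (s i) (t i) p
  fin : ∀ i, (Function.support (f i)).Finite
  cap : ∀ v, ∀ S ⊆ N.incE v, ∑ e ∈ S, N.edgeFlow f e ≤ N.rho v S

/-- `D(F)`: the total demand of the pairs separated by `F`. -/
noncomputable def sepDemand (N : UPolyNet V E) {ι : Type} [Fintype ι]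
    (s t : ι → V) (D : ι → ℝ) (F : Finset E) : ℝ :=
  ∑ i : ι, if USep N.ep1 N.ep2 F (s i) (t i) then D i else 0

/-- The value of the maximum throughput multicommodity flow. -/
noncomputable def maxThroughput (N : UPolyNet V E) {ι : Type} [Fintype ι]
    (s t : ι → V) : ℝ :=
  sSup { r : ℝ | ∃ f : ι → List E → ℝ, N.IsFlow s t f ∧ r = ∑ i : ι, rate f i }

/-- The value of the maximum concurrent multicommodity flow for demands `D`. -/
noncomputable def maxConcurrent (N : UPolyNet V E) {ι : Type} [Fintype ι]
    (s t : ι → V) (D : ι → ℝ) : ℝ :=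
  sSup { lam : ℝ | ∃ f : ι → List E → ℝ, N.IsFlow s t f ∧ ∀ i, rate f i = lam * D i }

/-- The vector `d_v`: for an edge `e` incident to `v`, its portion `ℓ(e,v)`
assigned to `v` by the fractional cut solution with portions `c1` (at `ep1`)
and `c2` (at `ep2`). -/
def dvec (N : UPolyNet V E) (c1 c2 : E → ℝ) (v : V) : E → ℝ :=
  fun e => if N.ep1 e = v then c1 e else c2 e

/-- `ρ̂_v(d_v)`, the contribution of the node `v` to the fractional cut cost. -/
noncomputable def nodeVol (N : UPolyNet V E) (c1 c2 : E → ℝ) (v : V) : ℝ :=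
  lovaszExt (N.rho v) (N.incE v) (N.dvec c1 c2 v)

/-- `vol(X) = Σ_{v ∈ X} ρ̂_v(d_v)`. -/
noncomputable def vol (N : UPolyNet V E) (c1 c2 : E → ℝ) (X : Finset V) : ℝ :=
  ∑ v ∈ X, N.nodeVol c1 c2 v

end UPolyNet

open UPolyNet

/-!
Charge each edge `e = uv` of `δ(S_θ)` to an endpoint `w` with `|θ - g w| ≤ ℓ(e,w)`: one exists
because `θ` lies between `g u` and `g v`, so `|θ - g u| + |θ - g v| = |g u - g v| ≤ ℓ(e)`.
The edges charged to `w` then lie in the level set `{e : d_w(e) ≥ |θ - g w|}`, so `ν(δ(S_θ))` is at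
most `Σ_w ρ_w(d_w ≥ |θ - g w|)` over the nodes `w` with `g w ∈ [a₀,b₀]`. Integrating over `θ`, each
level `t` of `d_w` is met at most twice, at `θ = g w ± t`, whence `2 ρ̂_w(d_w)`.
-/

theorem intervalIntegral_le_of_forall_le_of_nonneg {f g : ℝ → ℝ} {a b : ℝ} (hab : a ≤ b)
    (hg : IntervalIntegrable g volume a b) (hg0 : ∀ x ∈ Set.Icc a b, 0 ≤ g x)
    (hfg : ∀ x ∈ Set.Icc a b, f x ≤ g x) :
    ∫ x in a..b, f x ≤ ∫ x in a..b, g x := by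
  by_cases hf : IntervalIntegrable f volume a b
  · exact intervalIntegral.integral_mono_on hab hf hg hfg
  · rw [intervalIntegral.integral_undef hf]
    exact intervalIntegral.integral_nonneg hab hg0

theorem integrable_comp_abs_of_integrableOn_Ioi {f : ℝ → ℝ} (hf : IntegrableOn f (Set.Ioi 0)) :
    Integrable fun x => f |x| := by
  have hIoi : IntegrableOn (fun x => f |x|) (Set.Ioi 0) :=
    hf.congr_fun (fun x hx => by rw [abs_of_pos hx]) measurableSet_Ioi
  have hIic : IntegrableOn (fun x => f |x|) (Set.Iic 0) := by
    have hneg : MeasurableEmbedding fun x : ℝ => -x := (Homeomorph.neg ℝ).measurableEmbedding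
    rw [← Measure.map_neg_eq_self (volume : Measure ℝ), hneg.integrableOn_map_iff]
    simp_rw [Function.comp_def, abs_neg, Set.neg_preimage, Set.neg_Iic, neg_zero]
    exact (integrableOn_Ici_iff_integrableOn_Ioi).mpr hIoi
  simpa only [Set.Iic_union_Ioi, integrableOn_univ] using hIic.union hIoi

theorem intervalIntegral_comp_abs_sub_le {h : ℝ → ℝ} (hnn : ∀ t, 0 ≤ h t)
    (hint : IntegrableOn h (Set.Ioi 0)) (c : ℝ) {a b : ℝ} (hab : a ≤ b) :
    ∫ θ in a..b, h |θ - c| ≤ 2 * ∫ t in Set.Ioi 0, h t := by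
  have hI : Integrable fun θ => h |θ - c| :=
    (integrable_comp_abs_of_integrableOn_Ioi hint).comp_sub_right c
  calc ∫ θ in a..b, h |θ - c| = ∫ θ in Set.Ioc a b, h |θ - c| :=
        intervalIntegral.integral_of_le hab
    _ ≤ ∫ θ, h |θ - c| := setIntegral_le_integral hI (ae_of_all _ fun _ => hnn _)
    _ = ∫ θ, h |θ| := integral_sub_right_eq_self (fun θ => h |θ|) c
    _ = 2 * ∫ t in Set.Ioi 0, h t := integral_comp_abs

theorem Antitone.integrableOn_Ioi_of_eq_zero {h : ℝ → ℝ} (hh : Antitone h) {M : ℝ}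
    (hM : ∀ t, M < t → h t = 0) (a : ℝ) : IntegrableOn h (Set.Ioi a) := by
  have hIcc : IntegrableOn h (Set.Icc a M) :=
    (hh.antitoneOn _).integrableOn_isCompact isCompact_Icc
  have hIoi : IntegrableOn h (Set.Ioi M) :=
    integrableOn_zero.congr_fun (fun t ht => (hM t ht).symm) measurableSet_Ioi
  exact (hIcc.union hIoi).mono_set fun t ht => (le_or_gt t M).imp (fun htM => ⟨ht.le, htM⟩) id

section LovaszExt

variable {E : Type} {ρ : Finset E → ℝ} {ground : Finset E} {x : E → ℝ}

variable (ρ ground x) in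
noncomputable def lovaszIntegrand (t : ℝ) : ℝ :=
  ρ (ground.filter fun e => t ≤ x e)

theorem lovaszExt_eq_integral_lovaszIntegrand [Fintype E] :
    lovaszExt ρ ground x = ∫ t in Set.Ioi 0, lovaszIntegrand ρ ground x t :=
  rfl

theorem lovaszIntegrand_nonneg (hnn : ∀ A ⊆ ground, 0 ≤ ρ A) (t : ℝ) :
    0 ≤ lovaszIntegrand ρ ground x t :=
  hnn _ (filter_subset _ _)

theorem lovaszIntegrand_antitone (hmono : ∀ A B, A ⊆ B → B ⊆ ground → ρ A ≤ ρ B) :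
    Antitone (lovaszIntegrand ρ ground x) :=
  fun _ _ hst => hmono _ _ (monotone_filter_right _ fun _ _ => hst.trans)
    (filter_subset _ _)

theorem lovaszIntegrand_eq_zero (hempty : ρ ∅ = 0) {t : ℝ} (ht : ∀ e, x e < t) :
    lovaszIntegrand ρ ground x t = 0 := by
  rw [lovaszIntegrand, filter_false_of_mem fun e _ => not_le.mpr (ht e), hempty]

theorem integrableOn_lovaszIntegrand [Finite E] (hempty : ρ ∅ = 0)
    (hmono : ∀ A B, A ⊆ B → B ⊆ ground → ρ A ≤ ρ B) (a : ℝ) :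
    IntegrableOn (lovaszIntegrand ρ ground x) (Set.Ioi a) := by
  obtain ⟨M, hM⟩ := Finite.bddAbove_range x
  exact (lovaszIntegrand_antitone hmono).integrableOn_Ioi_of_eq_zero
    (fun t ht => lovaszIntegrand_eq_zero hempty fun e => (hM ⟨e, rfl⟩).trans_lt ht) a

end LovaszExt

theorem udist_endpoints_le {V E : Type} [DecidableEq V] (ep1 ep2 : E → V) (len : E → ℝ)
    (e : E) : udist ep1 ep2 len (ep1 e) (ep2 e) ≤ ENNReal.ofReal (len e) :=
  iInf_le_of_le ⟨[e], Or.inl rfl, by simp [UWalk]⟩ (by simp)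

theorem abs_sub_le_of_ofReal_abs_sub_le_udist {V E : Type} [DecidableEq V] {ep1 ep2 : E → V}
    {len : E → ℝ} {g : V → ℝ}
    (hLip : ∀ u v, ENNReal.ofReal |g u - g v| ≤ udist ep1 ep2 len u v) {e : E}
    (he : 0 ≤ len e) : |g (ep1 e) - g (ep2 e)| ≤ len e :=
  (ENNReal.ofReal_le_ofReal_iff he).mp ((hLip _ _).trans (udist_endpoints_le ep1 ep2 len e))

namespace UPolyNet

variable {V E : Type} [Fintype V] [Fintype E] [DecidableEq V] [DecidableEq E]
  (N : UPolyNet V E)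

theorem cutCost_le_sum_of_assignment {F : Finset E} (γ : E → V)
    (hγ : ∀ e ∈ F, γ e = N.ep1 e ∨ γ e = N.ep2 e) :
    N.cutCost F ≤ ∑ v, N.rho v ((N.incE v ∩ F).filter fun e => γ e = v) := by
  refine csInf_le ⟨0, ?_⟩ ⟨γ, hγ, rfl⟩
  rintro c ⟨γ', -, rfl⟩
  exact sum_nonneg fun v _ => N.rho_nonneg v _ ((filter_subset _ _).trans inter_subset_left)

noncomputable def nodeProfile (c1 c2 : E → ℝ) (v : V) : ℝ → ℝ :=
  lovaszIntegrand (N.rho v) (N.incE v) (N.dvec c1 c2 v)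

theorem nodeProfile_nonneg (c1 c2 : E → ℝ) (v : V) (t : ℝ) : 0 ≤ N.nodeProfile c1 c2 v t :=
  lovaszIntegrand_nonneg (N.rho_nonneg v) t

theorem intervalIntegrable_nodeProfile_comp_abs_sub (c1 c2 : E → ℝ) (v : V) (c a b : ℝ) :
    IntervalIntegrable (fun θ => N.nodeProfile c1 c2 v |θ - c|) volume a b :=
  ((integrable_comp_abs_of_integrableOn_Ioi (integrableOn_lovaszIntegrand (N.rho_empty v)
    (N.rho_mono v) 0)).comp_sub_right c).intervalIntegrable

theorem intervalIntegral_nodeProfile_comp_abs_sub_le (c1 c2 : E → ℝ) (v : V) (c : ℝ) {a b : ℝ}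
    (hab : a ≤ b) : ∫ θ in a..b, N.nodeProfile c1 c2 v |θ - c| ≤ 2 * N.nodeVol c1 c2 v := by
  rw [nodeVol, lovaszExt_eq_integral_lovaszIntegrand]
  exact intervalIntegral_comp_abs_sub_le (N.nodeProfile_nonneg c1 c2 v)
    (integrableOn_lovaszIntegrand (N.rho_empty v) (N.rho_mono v) 0) c hab

theorem intervalIntegrable_sum_nodeProfile (c1 c2 : E → ℝ) (T : Finset V) (g : V → ℝ)
    (a b : ℝ) :
    IntervalIntegrable (fun θ => ∑ v ∈ T, N.nodeProfile c1 c2 v |θ - g v|) volume a b := by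
  simpa only [Finset.sum_fn] using IntervalIntegrable.sum T fun v _ =>
    N.intervalIntegrable_nodeProfile_comp_abs_sub c1 c2 v (g v) a b

theorem intervalIntegral_sum_nodeProfile_le (c1 c2 : E → ℝ) (T : Finset V) (g : V → ℝ)
    {a b : ℝ} (hab : a ≤ b) :
    ∫ θ in a..b, ∑ v ∈ T, N.nodeProfile c1 c2 v |θ - g v| ≤ 2 * N.vol c1 c2 T := by
  rw [intervalIntegral.integral_finsetSum fun v _ =>
    N.intervalIntegrable_nodeProfile_comp_abs_sub c1 c2 v (g v) a b, vol, mul_sum]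
  exact sum_le_sum fun v _ => N.intervalIntegral_nodeProfile_comp_abs_sub_le c1 c2 v (g v) hab

noncomputable def cutAssignment (c1 : E → ℝ) (g : V → ℝ) (θ : ℝ) (e : E) : V :=
  if |θ - g (N.ep1 e)| ≤ c1 e then N.ep1 e else N.ep2 e

theorem abs_sub_le_dvec_cutAssignment {c1 c2 : E → ℝ} {g : V → ℝ} {θ : ℝ} {e : E}
    (hlen : |g (N.ep1 e) - g (N.ep2 e)| ≤ c1 e + c2 e)
    (he : e ∈ uvcut N.ep1 N.ep2 (univ.filter fun u => g u < θ)) :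
    |θ - g (N.cutAssignment c1 g θ e)| ≤ N.dvec c1 c2 (N.cutAssignment c1 g θ e) e := by
  have hcut : (g (N.ep1 e) < θ ∧ θ ≤ g (N.ep2 e)) ∨ (θ ≤ g (N.ep1 e) ∧ g (N.ep2 e) < θ) := by
    simpa [uvcut] using he
  have hne : N.ep1 e ≠ N.ep2 e := by
    intro h
    rw [h] at hcut
    rcases hcut with h | h <;> linarith [h.1, h.2]
  have hsplit : |θ - g (N.ep1 e)| + |θ - g (N.ep2 e)| = |g (N.ep1 e) - g (N.ep2 e)| := by
    have hθ : θ ∈ segment ℝ (g (N.ep1 e)) (g (N.ep2 e)) := by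
      rw [segment_eq_uIcc, Set.mem_uIcc]
      rcases hcut with h | h
      · exact Or.inl ⟨h.1.le, h.2⟩
      · exact Or.inr ⟨h.2.le, h.1⟩
    simpa only [Real.dist_eq, abs_sub_comm (g (N.ep1 e))] using dist_add_dist_of_mem_segment hθ
  unfold cutAssignment
  split_ifs with h
  · simpa [dvec] using h
  · simp only [dvec, if_neg hne]
    linarith

theorem cutCost_uvcut_le_sum_nodeProfile {c1 c2 : E → ℝ} {g : V → ℝ}
    (hlen : ∀ e, |g (N.ep1 e) - g (N.ep2 e)| ≤ c1 e + c2 e) {θ : ℝ} {T : Finset V}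
    (hT : ∀ e ∈ uvcut N.ep1 N.ep2 (univ.filter fun u => g u < θ), N.ep1 e ∈ T ∧ N.ep2 e ∈ T) :
    N.cutCost (uvcut N.ep1 N.ep2 (univ.filter fun u => g u < θ)) ≤
      ∑ v ∈ T, N.nodeProfile c1 c2 v |θ - g v| := by
  set F := uvcut N.ep1 N.ep2 (univ.filter fun u => g u < θ)
  set γ := N.cutAssignment c1 g θ
  set A := fun v => (N.incE v ∩ F).filter fun e => γ e = v
  have hγ : ∀ e ∈ F, γ e = N.ep1 e ∨ γ e = N.ep2 e := fun e _ => by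
    simp only [γ, cutAssignment]
    split_ifs <;> simp
  have hA_mem : ∀ v, ∀ e ∈ A v, v ∈ T := by
    intro v e he
    simp only [A, mem_filter, mem_inter] at he
    obtain ⟨⟨-, heF⟩, rfl⟩ := he
    rcases hγ e heF with h | h <;> rw [h]
    exacts [(hT e heF).1, (hT e heF).2]
  have hA_sub : ∀ v, A v ⊆ (N.incE v).filter fun e => |θ - g v| ≤ N.dvec c1 c2 v e := by
    intro v e he
    simp only [A, mem_filter, mem_inter] at he
    obtain ⟨⟨hev, heF⟩, rfl⟩ := he
    exact mem_filter.mpr ⟨hev, N.abs_sub_le_dvec_cutAssignment (hlen e) heF⟩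
  calc N.cutCost F ≤ ∑ v, N.rho v (A v) := N.cutCost_le_sum_of_assignment γ hγ
    _ = ∑ v ∈ T, N.rho v (A v) := by
      refine (sum_subset (subset_univ T) fun v _ hv => ?_).symm
      rw [eq_empty_of_forall_notMem fun e he => hv (hA_mem v e he), N.rho_empty]
    _ ≤ ∑ v ∈ T, N.nodeProfile c1 c2 v |θ - g v| :=
      sum_le_sum fun v _ => N.rho_mono v _ _ (hA_sub v) (filter_subset _ _)

end UPolyNet

theorem line_embedding_cut_cost_bound_refined_general {V E : Type} [Fintype V] [Fintype E]
    [DecidableEq V] [DecidableEq E] (N : UPolyNet V E)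
    (ℓ c1 c2 : E → ℝ) (hc1 : ∀ e, 0 ≤ c1 e) (hc2 : ∀ e, 0 ≤ c2 e)
    (hsum : ∀ e, c1 e + c2 e = ℓ e)
    (a₀ a b b₀ : ℝ) (h2 : a < b)
    (g : V → ℝ)
    (hLip : ∀ u v : V, ENNReal.ofReal |g u - g v| ≤ udist N.ep1 N.ep2 ℓ u v)
    (hedge : ∀ θ ∈ Set.Icc a b,
      ∀ e ∈ uvcut N.ep1 N.ep2 (Finset.univ.filter (fun u => g u < θ)),
        g (N.ep1 e) ∈ Set.Icc a₀ b₀ ∧ g (N.ep2 e) ∈ Set.Icc a₀ b₀) :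
    (∫ θ in a..b,
        N.cutCost (uvcut N.ep1 N.ep2 (Finset.univ.filter (fun u => g u < θ)))) ≤
      2 * ∑ v ∈ Finset.univ.filter (fun v => g v ∈ Set.Icc a₀ b₀),
            N.nodeVol c1 c2 v := by
  set T := univ.filter fun v => g v ∈ Set.Icc a₀ b₀
  have hlen : ∀ e, |g (N.ep1 e) - g (N.ep2 e)| ≤ c1 e + c2 e := fun e => by
    rw [hsum e]
    exact abs_sub_le_of_ofReal_abs_sub_le_udist hLip (hsum e ▸ add_nonneg (hc1 e) (hc2 e))
  calc (∫ θ in a..b, N.cutCost (uvcut N.ep1 N.ep2 (univ.filter fun u => g u < θ)))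
      ≤ ∫ θ in a..b, ∑ v ∈ T, N.nodeProfile c1 c2 v |θ - g v| :=
        intervalIntegral_le_of_forall_le_of_nonneg h2.le
          (N.intervalIntegrable_sum_nodeProfile c1 c2 T g a b)
          (fun θ _ => sum_nonneg fun v _ => N.nodeProfile_nonneg c1 c2 v _)
          (fun θ hθ => N.cutCost_uvcut_le_sum_nodeProfile hlen fun e he => by
            simpa [T] using hedge θ hθ e he)
    _ ≤ 2 * N.vol c1 c2 T := N.intervalIntegral_sum_nodeProfile_le c1 c2 T g h2.le

/-- Let `N` be an undirected polymatroidal network with a fractional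
cut solution, `g : V → [0,β]` 1-Lipschitz w.r.t. `dist_ℓ`, `0 ≤ a₀ ≤ a < b ≤ b₀ ≤ β`,
and `S_θ = {u : g u < θ}`. If every edge of `∪_{θ∈[a,b]} δ(S_θ)` has both endpoints
mapped by `g` into `[a₀,b₀]`, then
`∫_a^b ν(δ(S_θ)) dθ ≤ 2 · Σ_{v : g v ∈ [a₀,b₀]} ρ̂_v(d_v)`. -/
theorem line_embedding_cut_cost_bound_refined {V E : Type} [Fintype V] [Fintype E]
    [DecidableEq V] [DecidableEq E] (N : UPolyNet V E)
    (ℓ c1 c2 : E → ℝ) (hc1 : ∀ e, 0 ≤ c1 e) (hc2 : ∀ e, 0 ≤ c2 e)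
    (hsum : ∀ e, c1 e + c2 e = ℓ e)
    (β a₀ a b b₀ : ℝ) (h0 : 0 ≤ a₀) (h1 : a₀ ≤ a) (h2 : a < b) (h3 : b ≤ b₀) (h4 : b₀ ≤ β)
    (g : V → ℝ) (hg : ∀ u, g u ∈ Set.Icc (0:ℝ) β)
    (hLip : ∀ u v : V, ENNReal.ofReal |g u - g v| ≤ udist N.ep1 N.ep2 ℓ u v)
    (hedge : ∀ θ ∈ Set.Icc a b,
      ∀ e ∈ uvcut N.ep1 N.ep2 (Finset.univ.filter (fun u => g u < θ)),
        g (N.ep1 e) ∈ Set.Icc a₀ b₀ ∧ g (N.ep2 e) ∈ Set.Icc a₀ b₀) :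
    (∫ θ in a..b,
        N.cutCost (uvcut N.ep1 N.ep2 (Finset.univ.filter (fun u => g u < θ)))) ≤
      2 * ∑ v ∈ Finset.univ.filter (fun v => g v ∈ Set.Icc a₀ b₀),
            N.nodeVol c1 c2 v :=
  line_embedding_cut_cost_bound_refined_general N ℓ c1 c2 hc1 hc2 hsum a₀ a b b₀ h2 g hLip hedge
end

section
/- Let G=(V,E) be an undirected polymatroidal network with a fractional cut solution ℓ, ℓ(e,u), ℓ(e,v), let k ≥ 2 be such that log₂ k is a positive integer multiple of 3, and let 0 < δ < 1 with ℓ(e) < δ/(2·log₂ k) for every edge e. Then for every node s there exists r ∈ [0,δ) such that ν(δ(B(s,r))) ≤ 28·(log₂ k)·(1/δ)·(vol(B(s,r)) + vol(V)/k), where B(s,r) = {u ∈ V : dist_ℓ(s,u) ≤ r} and vol(X) = Σ_{v∈X} ρ̂_v(d_v). -/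
open Finset MeasureTheory
open scoped ENNReal Classical

open UPolyNet

/-! Suppose every radius `r ∈ [0, δ)` violates the bound. Every edge of `δ(B(s,r))` has an
endpoint `v` whose side of the edge, of length `ℓ(e,v)`, meets the sphere of radius `r`; charging
each cut edge to such an endpoint gives `ν(δ(B(s,r))) ≤ ∑_v ρ_v(S_v(r))`, where `S_v(r)` collects
these edges at `v`. Integrated over `r ∈ (a, a + ε]`, with `ε = δ / (2 log k)`, the right side is
at most `2 vol(B(s, a + 2ε))`, because `ρ_v(S_v(·))` integrates to at most twice the Lovász
extension `ρ̂_v(d_v)`. With the constant `28` this makes `U(r) = vol(B(s,r)) + vol(V)/k` grow by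
a factor `7` every `2ε`, so `U(δ) > 7^(log k) U(0) ≥ (k + 1) U(0) ≥ U(δ)`. -/

section Lovasz

variable {E : Type} [Fintype E]

theorem integrableOn_comp_finset {α : Type*} [MeasurableSpace α] {μ : Measure α} {I : Set α}
    (hI : μ I ≠ ∞) (F : Finset E → ℝ) {A : α → Finset E} (hA : Measurable A) :
    IntegrableOn (fun a => F (A a)) I μ :=
  Measure.integrableOn_of_bounded hI ((measurable_of_countable F).comp hA).aestronglyMeasurable
    (M := ∑ B, ‖F B‖) <| ae_of_all _ fun a =>
      single_le_sum (f := fun B => ‖F B‖) (fun _ _ => norm_nonneg _) (mem_univ (A a))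

variable {F : Finset E → ℝ} {g : Finset E}

theorem integrable_apply_filter_abs_sub_le (hF0 : F ∅ = 0) (x : E → ℝ) (t : ℝ) :
    Integrable fun r => F (g.filter fun e => |r - t| ≤ x e) := by
  set M := ∑ e, |x e|
  have hvanish : ∀ r, r ∉ Set.Icc (-M) M → F (g.filter fun e => |r| ≤ x e) = 0 := by
    intro r hr
    have hxr : ∀ e, x e < |r| := fun e =>
      calc x e ≤ M :=
            (le_abs_self _).trans (single_le_sum (fun e _ => abs_nonneg (x e)) (mem_univ e))
        _ < |r| := by rw [Set.mem_Icc, not_and_or, not_le, not_le] at hr; grind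
    rw [filter_false_of_mem fun e _ => (hxr e).not_ge, hF0]
  have hIcc : IntegrableOn (fun r => F (g.filter fun e => |r| ≤ x e)) (Set.Icc (-M) M) :=
    integrableOn_comp_finset (by simp) F <| measurable_finset_iff.2 fun e => by
      simp only [mem_filter]; fun_prop
  exact (hIcc.integrable_of_forall_notMem_eq_zero hvanish).comp_sub_right t

/-- Integrating `F(g.filter (|r - t| ≤ x ·))` over `r ∈ ℝ` sweeps the level sets of the
Lovász extension twice, once on each side of `t`. -/
theorem setIntegral_le_two_mul_lovaszExt (hF0 : F ∅ = 0) (hFnn : ∀ A ⊆ g, 0 ≤ F A)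
    (hFmono : ∀ A B, A ⊆ B → B ⊆ g → F A ≤ F B) (x : E → ℝ) (t : ℝ) {I : Set ℝ}
    (hI : MeasurableSet I) {A : ℝ → Finset E} (hAi : IntegrableOn (fun r => F (A r)) I)
    (hA : ∀ r ∈ I, A r ⊆ g.filter fun e => |r - t| ≤ x e) :
    ∫ r in I, F (A r) ≤ 2 * lovaszExt F g x := by
  have hG := integrable_apply_filter_abs_sub_le (g := g) hF0 x t
  calc ∫ r in I, F (A r) ≤ ∫ r in I, F (g.filter fun e => |r - t| ≤ x e) :=
        setIntegral_mono_on hAi hG.integrableOn hI fun r hr =>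
          hFmono _ _ (hA r hr) (filter_subset _ _)
    _ ≤ ∫ r, F (g.filter fun e => |r - t| ≤ x e) :=
        setIntegral_le_integral hG (ae_of_all _ fun r => hFnn _ (filter_subset _ _))
    _ = ∫ r, F (g.filter fun e => |r| ≤ x e) :=
        integral_sub_right_eq_self (fun r => F (g.filter fun e => |r| ≤ x e)) t
    _ = 2 * lovaszExt F g x := integral_comp_abs (f := fun θ => F (g.filter fun e => θ ≤ x e))

end Lovasz

theorem mul_sub_lt_setIntegral_Ioc {h : ℝ → ℝ} {a b c : ℝ} (hab : a < b)
    (hi : IntegrableOn h (Set.Ioc a b)) (hc : ∀ r ∈ Set.Ioc a b, c < h r) :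
    c * (b - a) < ∫ r in Set.Ioc a b, h r := by
  have := intervalIntegral.integral_lt_integral_of_ae_le_of_measure_setOfPred_lt_ne_zero hab.le
    intervalIntegrable_const ((intervalIntegrable_iff_integrableOn_Ioc_of_le hab.le).2 hi)
    ((ae_restrict_iff' measurableSet_Ioc).2 (ae_of_all _ fun r hr => (hc r hr).le))
    (by rw [Measure.restrict_apply_superset (show Set.Ioc a b ⊆ {r | c < h r} from hc)]; simp [hab])
  rwa [intervalIntegral.integral_const, intervalIntegral.integral_of_le hab.le, smul_eq_mul,
    mul_comm] at this

theorem pow_mul_lt_of_forall_mul_lt {W : ℕ → ℝ} {c : ℝ} {n : ℕ} (hc : 0 ≤ c) (hn : 0 < n)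
    (h : ∀ i < n, c * W i < W (i + 1)) : c ^ n * W 0 < W n := by
  induction n with
  | zero => omega
  | succ n ih =>
    rcases Nat.eq_zero_or_pos n with rfl | hn
    · simpa using h 0 one_pos
    · calc c ^ (n + 1) * W 0 = c * (c ^ n * W 0) := by ring
        _ ≤ c * W n := mul_le_mul_of_nonneg_left (ih hn fun i hi => h i (by omega)).le hc
        _ < W (n + 1) := h n (by omega)

section Walks

variable {V E : Type} [DecidableEq V]

theorem UWalk.concat {ep1 ep2 : E → V} {s u : V} {p : List E} (hp : UWalk ep1 ep2 s u p)
    {e : E} (he : ep1 e = u ∨ ep2 e = u) :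
    UWalk ep1 ep2 s (if ep1 e = u then ep2 e else ep1 e) (p ++ [e]) := by
  induction p generalizing s with
  | nil => subst hp; exact ⟨he, rfl⟩
  | cons f q ih => exact ⟨hp.1, ih hp.2⟩

theorem udist_le_add_of_mem_edge (ep1 ep2 : E → V) (len : E → ℝ) (s : V) {u : V} {e : E}
    (he : ep1 e = u ∨ ep2 e = u) :
    udist ep1 ep2 len s (if ep1 e = u then ep2 e else ep1 e) ≤
      udist ep1 ep2 len s u + ENNReal.ofReal (len e) := by
  rw [udist, udist, ENNReal.iInf_add]
  refine le_iInf fun ⟨p, hp⟩ => (iInf_le _ ⟨p ++ [e], hp.concat he⟩).trans ?_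
  simpa using ENNReal.ofReal_add_le

end Walks

namespace UPolyNet

variable {V E : Type} [Fintype V] [Fintype E] [DecidableEq V] [DecidableEq E]
  (N : UPolyNet V E) {c1 c2 ℓ : E → ℝ} (s : V)

theorem nodeVol_nonneg (c1 c2 : E → ℝ) (v : V) : 0 ≤ N.nodeVol c1 c2 v :=
  setIntegral_nonneg measurableSet_Ioi fun _ _ => N.rho_nonneg v _ (filter_subset _ _)

theorem vol_nonneg (c1 c2 : E → ℝ) (X : Finset V) : 0 ≤ N.vol c1 c2 X :=
  sum_nonneg fun v _ => N.nodeVol_nonneg c1 c2 v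

theorem vol_mono (c1 c2 : E → ℝ) {X Y : Finset V} (hXY : X ⊆ Y) :
    N.vol c1 c2 X ≤ N.vol c1 c2 Y :=
  sum_le_sum_of_subset_of_nonneg hXY fun v _ _ => N.nodeVol_nonneg c1 c2 v

theorem cutCost_le_sum_rho (F : Finset E) (g : E → V)
    (hg : ∀ e ∈ F, g e = N.ep1 e ∨ g e = N.ep2 e) :
    N.cutCost F ≤ ∑ v, N.rho v ((N.incE v ∩ F).filter fun e => g e = v) := by
  refine csInf_le ⟨0, ?_⟩ ⟨g, hg, rfl⟩
  rintro c ⟨g', -, rfl⟩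
  exact sum_nonneg fun v _ =>
    N.rho_nonneg v _ ((filter_subset _ _).trans inter_subset_left)

variable {N}

theorem dvec_nonneg (hc1 : ∀ e, 0 ≤ c1 e) (hc2 : ∀ e, 0 ≤ c2 e) (v : V) (e : E) :
    0 ≤ N.dvec c1 c2 v e := by
  unfold dvec; split_ifs <;> simp [hc1, hc2]

theorem dvec_le (hc1 : ∀ e, 0 ≤ c1 e) (hc2 : ∀ e, 0 ≤ c2 e) (hsum : ∀ e, c1 e + c2 e = ℓ e)
    (v : V) (e : E) : N.dvec c1 c2 v e ≤ ℓ e := by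
  unfold dvec; split_ifs <;> linarith [hc1 e, hc2 e, hsum e]

variable (N) (c1 c2 ℓ)

noncomputable def ball (r : ℝ) : Finset V :=
  univ.filter fun u => udist N.ep1 N.ep2 ℓ s u ≤ ENNReal.ofReal r

/-- The edges at `v` whose `v`-side portion, of length `ℓ(e,v)`, meets the sphere of radius
`r` around `s`; with `t = dist(s,v)` finite this says `t - ℓ(e,v) ≤ r < t + ℓ(e,v)`. -/
noncomputable def boundary (v : V) (r : ℝ) : Finset E :=
  (N.incE v).filter fun e =>
    udist N.ep1 N.ep2 ℓ s v ≤ ENNReal.ofReal r + ENNReal.ofReal (N.dvec c1 c2 v e) ∧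
      ENNReal.ofReal r < udist N.ep1 N.ep2 ℓ s v + ENNReal.ofReal (N.dvec c1 c2 v e)

variable {N c1 c2 ℓ s}

theorem ball_mono {r r' : ℝ} (h : r ≤ r') : N.ball ℓ s r ⊆ N.ball ℓ s r' :=
  fun u hu => mem_filter.2 ⟨mem_univ u, (mem_filter.1 hu).2.trans (ENNReal.ofReal_le_ofReal h)⟩

theorem mem_boundary_ep1 {r : ℝ} {e : E} :
    e ∈ N.boundary c1 c2 ℓ s (N.ep1 e) r ↔
      udist N.ep1 N.ep2 ℓ s (N.ep1 e) ≤ ENNReal.ofReal r + ENNReal.ofReal (c1 e) ∧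
        ENNReal.ofReal r < udist N.ep1 N.ep2 ℓ s (N.ep1 e) + ENNReal.ofReal (c1 e) := by
  rw [boundary, mem_filter, dvec, if_pos rfl]
  simp [incE]

theorem mem_boundary_ep2 {r : ℝ} {e : E} (hne : N.ep1 e ≠ N.ep2 e) :
    e ∈ N.boundary c1 c2 ℓ s (N.ep2 e) r ↔
      udist N.ep1 N.ep2 ℓ s (N.ep2 e) ≤ ENNReal.ofReal r + ENNReal.ofReal (c2 e) ∧
        ENNReal.ofReal r < udist N.ep1 N.ep2 ℓ s (N.ep2 e) + ENNReal.ofReal (c2 e) := by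
  rw [boundary, mem_filter, dvec, if_neg hne]
  simp [incE]

theorem mem_boundary_or_of_mem_uvcut (hc1 : ∀ e, 0 ≤ c1 e) (hc2 : ∀ e, 0 ≤ c2 e)
    (hsum : ∀ e, c1 e + c2 e = ℓ e) {r : ℝ} {e : E}
    (he : e ∈ uvcut N.ep1 N.ep2 (N.ball ℓ s r)) :
    e ∈ N.boundary c1 c2 ℓ s (N.ep1 e) r ∨ e ∈ N.boundary c1 c2 ℓ s (N.ep2 e) r := by
  have key : ∀ {du dw cu cw R : ℝ≥0∞}, du ≤ R → R < dw → dw ≤ du + cu + cw →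
      (du ≤ R + cu ∧ R < du + cu) ∨ (dw ≤ R + cw ∧ R < dw + cw) := by
    intro du dw cu cw R hu hw hdw
    by_cases h : R < du + cu
    · exact .inl ⟨le_add_right hu, h⟩
    · exact .inr ⟨hdw.trans (add_le_add_left (not_lt.1 h) _), hw.trans_le le_self_add⟩
  simp only [uvcut, ball, mem_filter, mem_univ, true_and] at he
  have hne : N.ep1 e ≠ N.ep2 e := by grind
  have hℓ : ENNReal.ofReal (ℓ e) = ENNReal.ofReal (c1 e) + ENNReal.ofReal (c2 e) := by
    rw [← hsum, ENNReal.ofReal_add (hc1 e) (hc2 e)]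
  have h12 := udist_le_add_of_mem_edge N.ep1 N.ep2 ℓ s (Or.inl rfl : N.ep1 e = N.ep1 e ∨ _)
  have h21 := udist_le_add_of_mem_edge N.ep1 N.ep2 ℓ s (Or.inr rfl : _ ∨ N.ep2 e = N.ep2 e)
  rw [if_pos rfl, hℓ, ← add_assoc] at h12
  rw [if_neg hne, hℓ, add_comm (ENNReal.ofReal (c1 e)), ← add_assoc] at h21
  rw [mem_boundary_ep1, mem_boundary_ep2 hne]
  rcases he with ⟨h1, h2⟩ | ⟨h1, h2⟩
  · exact key h1 (not_le.1 h2) h12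
  · exact (key h2 (not_le.1 h1) h21).symm

theorem cutCost_ball_le (hc1 : ∀ e, 0 ≤ c1 e) (hc2 : ∀ e, 0 ≤ c2 e)
    (hsum : ∀ e, c1 e + c2 e = ℓ e) (r : ℝ) :
    N.cutCost (uvcut N.ep1 N.ep2 (N.ball ℓ s r)) ≤
      ∑ v, N.rho v (N.boundary c1 c2 ℓ s v r) := by
  let g : E → V := fun e => if e ∈ N.boundary c1 c2 ℓ s (N.ep1 e) r then N.ep1 e else N.ep2 e
  refine (N.cutCost_le_sum_rho _ g fun e _ => by unfold g; split_ifs <;> simp).trans <|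
    sum_le_sum fun v _ => N.rho_mono v _ _ ?_ (filter_subset _ _)
  intro e he
  obtain ⟨⟨-, hcut⟩, rfl⟩ := by simpa only [mem_filter, mem_inter] using he
  unfold g
  split_ifs with h
  · exact h
  · exact (mem_boundary_or_of_mem_uvcut hc1 hc2 hsum hcut).resolve_left h

variable (N c1 c2 ℓ s) in
theorem integrableOn_rho_boundary (v : V) {I : Set ℝ} (hI : volume I ≠ ∞) :
    IntegrableOn (fun r => N.rho v (N.boundary c1 c2 ℓ s v r)) I :=
  integrableOn_comp_finset hI _ <| measurable_finset_iff.2 fun e => by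
    simp only [boundary, mem_filter]; fun_prop

theorem integral_rho_boundary_le (hc1 : ∀ e, 0 ≤ c1 e) (hc2 : ∀ e, 0 ≤ c2 e) {v : V}
    (hv : udist N.ep1 N.ep2 ℓ s v ≠ ⊤) {a b : ℝ} (ha : 0 ≤ a) :
    ∫ r in Set.Ioc a b, N.rho v (N.boundary c1 c2 ℓ s v r) ≤ 2 * N.nodeVol c1 c2 v := by
  set t := (udist N.ep1 N.ep2 ℓ s v).toReal
  refine setIntegral_le_two_mul_lovaszExt (N.rho_empty v) (N.rho_nonneg v) (N.rho_mono v) _ t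
    measurableSet_Ioc (integrableOn_rho_boundary N c1 c2 ℓ s v (by simp)) fun r hr e he => ?_
  have hr : 0 ≤ r := ha.trans hr.1.le
  have hx := dvec_nonneg hc1 hc2 v e (N := N)
  obtain ⟨he, hlo, hhi⟩ := by simpa only [boundary, mem_filter] using he
  rw [← ENNReal.ofReal_toReal hv, ← ENNReal.ofReal_add hr hx,
    ENNReal.ofReal_le_ofReal_iff (add_nonneg hr hx)] at hlo
  rw [← ENNReal.ofReal_toReal hv, ← ENNReal.ofReal_add ENNReal.toReal_nonneg hx,
    ENNReal.ofReal_lt_ofReal_iff_of_nonneg hr] at hhi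
  exact mem_filter.2 ⟨he, abs_sub_le_iff.2 ⟨by linarith, by linarith⟩⟩

theorem boundary_eq_empty (hc1 : ∀ e, 0 ≤ c1 e) (hc2 : ∀ e, 0 ≤ c2 e)
    (hsum : ∀ e, c1 e + c2 e = ℓ e) {ε r : ℝ} (hℓε : ∀ e, ℓ e ≤ ε) (hr : 0 ≤ r)
    {v : V} (hv : ENNReal.ofReal (r + ε) < udist N.ep1 N.ep2 ℓ s v) :
    N.boundary c1 c2 ℓ s v r = ∅ := by
  refine filter_false_of_mem fun e _ h => hv.not_ge (h.1.trans ?_)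
  rw [← ENNReal.ofReal_add hr (dvec_nonneg hc1 hc2 v e)]
  exact ENNReal.ofReal_le_ofReal (by linarith [dvec_le hc1 hc2 hsum v e (N := N), hℓε e])

theorem integral_sum_rho_boundary_le (hc1 : ∀ e, 0 ≤ c1 e) (hc2 : ∀ e, 0 ≤ c2 e)
    (hsum : ∀ e, c1 e + c2 e = ℓ e) {ε a b : ℝ} (hℓε : ∀ e, ℓ e ≤ ε) (ha : 0 ≤ a) :
    ∫ r in Set.Ioc a b, ∑ v, N.rho v (N.boundary c1 c2 ℓ s v r) ≤
      2 * N.vol c1 c2 (N.ball ℓ s (b + ε)) := by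
  rw [integral_finsetSum _ fun v _ => integrableOn_rho_boundary N c1 c2 ℓ s v (by simp), vol,
    ball, sum_filter, mul_sum]
  refine sum_le_sum fun v _ => ?_
  split_ifs with hv
  · exact integral_rho_boundary_le hc1 hc2 (ne_top_of_le_ne_top ENNReal.ofReal_ne_top hv) ha
  · refine (setIntegral_eq_zero_of_forall_eq_zero fun r hr => ?_).trans_le (by simp)
    rw [boundary_eq_empty hc1 hc2 hsum hℓε (ha.trans hr.1.le)
      ((ENNReal.ofReal_le_ofReal (by linarith [hr.2])).trans_lt (not_le.1 hv)), N.rho_empty]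

theorem mul_lt_two_mul_vol_ball (hc1 : ∀ e, 0 ≤ c1 e) (hc2 : ∀ e, 0 ≤ c2 e)
    (hsum : ∀ e, c1 e + c2 e = ℓ e) {ε a c : ℝ} (hε : 0 < ε) (hℓε : ∀ e, ℓ e ≤ ε) (ha : 0 ≤ a)
    (hcut : ∀ r ∈ Set.Ioc a (a + ε), c < N.cutCost (uvcut N.ep1 N.ep2 (N.ball ℓ s r))) :
    c * ε < 2 * N.vol c1 c2 (N.ball ℓ s (a + ε + ε)) :=
  calc c * ε = c * (a + ε - a) := by ring
    _ < ∫ r in Set.Ioc a (a + ε), ∑ v, N.rho v (N.boundary c1 c2 ℓ s v r) :=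
        mul_sub_lt_setIntegral_Ioc (by linarith)
          (integrable_finsetSum _ fun v _ => integrableOn_rho_boundary N c1 c2 ℓ s v (by simp))
          fun r hr => (hcut r hr).trans_le (cutCost_ball_le hc1 hc2 hsum r)
    _ ≤ 2 * N.vol c1 c2 (N.ball ℓ s (a + ε + ε)) :=
        integral_sum_rho_boundary_le hc1 hc2 hsum hℓε ha

theorem mul_vol_ball_add_lt (hc1 : ∀ e, 0 ≤ c1 e) (hc2 : ∀ e, 0 ≤ c2 e)
    (hsum : ∀ e, c1 e + c2 e = ℓ e) {δ ε w C a : ℝ} (hε : 0 < ε) (hℓε : ∀ e, ℓ e ≤ ε)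
    (hw : 0 ≤ w) (hC : 0 ≤ C) (ha : 0 ≤ a) (haδ : a + ε < δ)
    (hcut : ∀ r, 0 ≤ r → r < δ → C * (N.vol c1 c2 (N.ball ℓ s r) + w) <
      N.cutCost (uvcut N.ep1 N.ep2 (N.ball ℓ s r))) :
    C * ε * (N.vol c1 c2 (N.ball ℓ s a) + w) < 2 * (N.vol c1 c2 (N.ball ℓ s (a + ε + ε)) + w) := by
  have hU : ∀ r ∈ Set.Ioc a (a + ε),
      C * (N.vol c1 c2 (N.ball ℓ s a) + w) ≤ C * (N.vol c1 c2 (N.ball ℓ s r) + w) :=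
    fun r hr => by gcongr; exact N.vol_mono c1 c2 (ball_mono hr.1.le)
  have := mul_lt_two_mul_vol_ball hc1 hc2 hsum hε hℓε ha fun r hr =>
    (hU r hr).trans_lt (hcut r (ha.trans hr.1.le) (hr.2.trans_lt haδ))
  linarith

theorem seven_pow_mul_lt_vol_ball (hc1 : ∀ e, 0 ≤ c1 e) (hc2 : ∀ e, 0 ≤ c2 e)
    (hsum : ∀ e, c1 e + c2 e = ℓ e) {L : ℕ} (hL : 0 < L) {δ w C : ℝ} (hδ : 0 < δ) (hw : 0 ≤ w)
    (hCδ : C * δ = 28 * L) (hℓ : ∀ e, ℓ e ≤ δ / (2 * L))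
    (hcut : ∀ r, 0 ≤ r → r < δ → C * (N.vol c1 c2 (N.ball ℓ s r) + w) <
      N.cutCost (uvcut N.ep1 N.ep2 (N.ball ℓ s r))) :
    7 ^ L * (N.vol c1 c2 (N.ball ℓ s 0) + w) < N.vol c1 c2 (N.ball ℓ s δ) + w := by
  set ε := δ / (2 * L)
  have hε : 0 < ε := by positivity
  have hCε : C * ε = 14 := by simp only [ε]; field_simp; linarith
  have hC : 0 ≤ C := (mul_nonneg_iff_of_pos_right hδ).1 (by rw [hCδ]; positivity)
  have hstep : ∀ i < L, 7 * (N.vol c1 c2 (N.ball ℓ s (2 * i * ε)) + w) <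
      N.vol c1 c2 (N.ball ℓ s (2 * ↑(i + 1) * ε)) + w := fun i hi => by
    have hiL : (i : ℝ) + 1 ≤ L := by exact_mod_cast hi
    have := mul_vol_ball_add_lt hc1 hc2 hsum hε hℓ hw hC (by positivity)
      (by simp only [ε]; field_simp; nlinarith) hcut (a := 2 * i * ε)
    rw [hCε] at this
    rw [show 2 * ((i + 1 : ℕ) : ℝ) * ε = 2 * i * ε + ε + ε by push_cast; ring]
    linarith
  have h2Lε : 2 * (L : ℝ) * ε = δ := by simp only [ε]; field_simp
  simpa [h2Lε] using pow_mul_lt_of_forall_mul_lt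
    (W := fun i => N.vol c1 c2 (N.ball ℓ s (2 * i * ε)) + w) (by norm_num) hL hstep

end UPolyNet

theorem region_growing_general {V E : Type} [Fintype V] [Fintype E]
    [DecidableEq V] [DecidableEq E] (N : UPolyNet V E)
    (ℓ c1 c2 : E → ℝ) (hc1 : ∀ e, 0 ≤ c1 e) (hc2 : ∀ e, 0 ≤ c2 e)
    (hsum : ∀ e, c1 e + c2 e = ℓ e)
    (k : ℕ)
    (hk3 : ∃ m : ℕ, 0 < m ∧ Real.logb 2 k = 3 * (m : ℝ))
    (δ : ℝ) (hδ0 : 0 < δ)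
    (hℓ : ∀ e, ℓ e < δ / (2 * Real.logb 2 k))
    (s : V) :
    ∃ r : ℝ, 0 ≤ r ∧ r < δ ∧
      N.cutCost (uvcut N.ep1 N.ep2 (Finset.univ.filter
          (fun u => udist N.ep1 N.ep2 ℓ s u ≤ ENNReal.ofReal r))) ≤
        28 * Real.logb 2 k * (1 / δ) *
          (N.vol c1 c2 (Finset.univ.filter
              (fun u => udist N.ep1 N.ep2 ℓ s u ≤ ENNReal.ofReal r)) +
            N.vol c1 c2 Finset.univ / k) := by
  obtain ⟨m, hm, hlog⟩ := hk3
  have hL : Real.logb 2 k = (3 * m : ℕ) := by rw [hlog]; push_cast; rfl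
  set L := 3 * m
  have hk0 : (0 : ℝ) < k := Nat.cast_pos.2 <| Nat.pos_of_ne_zero fun h => by
    simp [h] at hlog; omega
  have hk : (k : ℝ) = 2 ^ L := by
    rw [← Real.rpow_natCast, ← hL, Real.rpow_logb two_pos (by norm_num) hk0]
  set w := N.vol c1 c2 univ / k
  have hvol : N.vol c1 c2 univ = 2 ^ L * w := by simp only [w]; rw [hk]; field_simp
  have hw : 0 ≤ w := div_nonneg (N.vol_nonneg c1 c2 _) hk0.le
  by_contra! hcut
  have hgrowth := seven_pow_mul_lt_vol_ball hc1 hc2 hsum (L := L) (by omega) hδ0 hw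
    (by rw [hL]; field_simp) (fun e => (hℓ e).le.trans_eq (by rw [hL])) hcut
  have h7 : (2 : ℝ) ^ L + 1 ≤ 7 ^ L := by
    exact_mod_cast Nat.pow_lt_pow_left (by norm_num : 2 < 7) (by omega : L ≠ 0)
  linarith [N.vol_mono c1 c2 (subset_univ (N.ball ℓ s δ)), mul_le_mul_of_nonneg_right h7 hw,
    mul_nonneg (pow_nonneg (by norm_num : (0 : ℝ) ≤ 7) L) (N.vol_nonneg c1 c2 (N.ball ℓ s 0))]

/-- **region growing.** Let `N` be an undirected polymatroidal network
with a fractional cut solution, let `k ≥ 2` be such that `log₂ k` is a positive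
integer multiple of `3`, and let `0 < δ < 1` with `ℓ(e) < δ/(2·log₂ k)` for every
edge. Then for every node `s` there exists `r ∈ [0,δ)` such that
`ν(δ(B(s,r))) ≤ 28·(log₂ k)·(1/δ)·(vol(B(s,r)) + vol(V)/k)`. -/
theorem region_growing {V E : Type} [Fintype V] [Fintype E]
    [DecidableEq V] [DecidableEq E] (N : UPolyNet V E)
    (ℓ c1 c2 : E → ℝ) (hc1 : ∀ e, 0 ≤ c1 e) (hc2 : ∀ e, 0 ≤ c2 e)
    (hsum : ∀ e, c1 e + c2 e = ℓ e)
    (k : ℕ) (hk : 2 ≤ k)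
    (hk3 : ∃ m : ℕ, 0 < m ∧ Real.logb 2 k = 3 * (m : ℝ))
    (δ : ℝ) (hδ0 : 0 < δ) (hδ1 : δ < 1)
    (hℓ : ∀ e, ℓ e < δ / (2 * Real.logb 2 k))
    (s : V) :
    ∃ r : ℝ, 0 ≤ r ∧ r < δ ∧
      N.cutCost (uvcut N.ep1 N.ep2 (Finset.univ.filter
          (fun u => udist N.ep1 N.ep2 ℓ s u ≤ ENNReal.ofReal r))) ≤
        28 * Real.logb 2 k * (1 / δ) *
          (N.vol c1 c2 (Finset.univ.filter
              (fun u => udist N.ep1 N.ep2 ℓ s u ≤ ENNReal.ofReal r)) +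
            N.vol c1 c2 Finset.univ / k) :=
  region_growing_general N ℓ c1 c2 hc1 hc2 hsum k hk3 δ hδ0 hℓ s
end

section
/- Let G=(V,E) be an undirected polymatroidal network with source-sink pairs s_1t_1,…,s_kt_k and demands D_1,…,D_k. For every edge set F ⊆ E with D(F) > 0 there exists a set S ⊆ V such that the bi-partition cut δ_G(S) satisfies ν(δ_G(S))/D(δ_G(S)) ≤ 2·ν(F)/D(F); that is, the sparsest bi-partition cut is within a factor 2 of the sparsest edge cut. -/
open Finset MeasureTheory
open scoped ENNReal Classical

open UPolyNet

/-!
Colour the connected components of `G ∖ F` independently and uniformly at random, and let `S`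
be the union of the components coloured `true`. Every edge of `δ(S)` joins two components, so
`δ(S) ⊆ F` and `ν(δ(S)) ≤ ν(F)` by monotonicity of the polymatroids. A pair separated by `F`
lies in two different components, hence is separated by `δ(S)` with probability `1/2`; so some
colouring achieves `D(δ(S)) ≥ D(F)/2`.
-/

namespace UWalk

variable {V E : Type} [DecidableEq V] {ep1 ep2 : E → V}

lemma append {s u t : V} {q : List E} :
    ∀ {p : List E}, UWalk ep1 ep2 s u p → UWalk ep1 ep2 u t q → UWalk ep1 ep2 s t (p ++ q)
  | [], hp, hq => by rwa [show s = u from hp]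
  | _ :: _, hp, hq => ⟨hp.1, append hp.2 hq⟩

lemma singleton_symm {u w : V} {e : E} (h : UWalk ep1 ep2 u w [e]) : UWalk ep1 ep2 w u [e] := by
  obtain ⟨hu, hw⟩ := h
  change (if ep1 e = u then ep2 e else ep1 e) = w at hw
  subst hw
  refine ⟨?_, ?_⟩ <;> split_ifs <;> simp_all [UWalk]

lemma reverse : ∀ {s t : V} {p : List E}, UWalk ep1 ep2 s t p → UWalk ep1 ep2 t s p.reverse
  | _, _, [], h => h.symm
  | _, _, _ :: _, h => by
    rw [List.reverse_cons]
    exact (reverse h.2).append (singleton_symm ⟨h.1, rfl⟩)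

lemma mem_iff_mem_of_forall_not_mem_uvcut [Fintype E] {S : Finset V} :
    ∀ {s t : V} {p : List E}, UWalk ep1 ep2 s t p → (∀ e ∈ p, e ∉ uvcut ep1 ep2 S) →
      (s ∈ S ↔ t ∈ S)
  | _, _, [], h, _ => by rw [show _ = _ from h]
  | s, _, e :: _, h, hp => by
    have he := hp e List.mem_cons_self
    simp only [uvcut, Finset.mem_filter, Finset.mem_univ, true_and] at he
    rw [← mem_iff_mem_of_forall_not_mem_uvcut h.2 fun e' h' => hp e' (List.mem_cons_of_mem _ h')]
    rcases h.1 with rfl | rfl <;> split_ifs <;> simp_all <;> tauto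

end UWalk

lemma usep_uvcut_of_not_iff {V E : Type} [DecidableEq V] [Fintype E] {ep1 ep2 : E → V}
    {S : Finset V} {s t : V} (h : ¬(s ∈ S ↔ t ∈ S)) : USep ep1 ep2 (uvcut ep1 ep2 S) s t :=
  fun ⟨_, hp, hpS⟩ => h (hp.mem_iff_mem_of_forall_not_mem_uvcut hpS)

section Components

variable {V E : Type} [DecidableEq V] (ep1 ep2 : E → V) (F : Finset E)

def componentSetoid : Setoid V where
  r u v := ∃ p : List E, UWalk ep1 ep2 u v p ∧ ∀ e ∈ p, e ∉ F
  iseqv :=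
    { refl := fun _ => ⟨[], rfl, by simp⟩
      symm := fun ⟨p, hp, hpF⟩ => ⟨p.reverse, hp.reverse, by simpa using hpF⟩
      trans := fun ⟨p, hp, hpF⟩ ⟨q, hq, hqF⟩ =>
        ⟨p ++ q, hp.append hq, by simpa [or_imp, forall_and] using And.intro hpF hqF⟩ }

/-- The union of the components of `G ∖ F` coloured `true` by `c`. -/
def colourSet [Fintype V] (c : Quotient (componentSetoid ep1 ep2 F) → Bool) : Finset V :=
  Finset.univ.filter (fun v => c ⟦v⟧)

variable {ep1 ep2 F}

lemma mk_ne_mk_of_usep {s t : V} (h : USep ep1 ep2 F s t) :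
    (⟦s⟧ : Quotient (componentSetoid ep1 ep2 F)) ≠ ⟦t⟧ :=
  fun heq => h (Quotient.exact heq)

variable [Fintype V] [Fintype E]

lemma uvcut_colourSet_subset (c : Quotient (componentSetoid ep1 ep2 F) → Bool) :
    uvcut ep1 ep2 (colourSet ep1 ep2 F c) ⊆ F := by
  intro e he
  by_contra heF
  have hcomp : (⟦ep1 e⟧ : Quotient (componentSetoid ep1 ep2 F)) = ⟦ep2 e⟧ :=
    Quotient.sound ⟨[e], ⟨Or.inl rfl, if_pos rfl⟩, by simpa using heF⟩
  simp only [uvcut, colourSet, Finset.mem_filter, Finset.mem_univ, true_and, hcomp] at he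
  tauto

lemma usep_uvcut_colourSet {c : Quotient (componentSetoid ep1 ep2 F) → Bool} {s t : V}
    (h : c ⟦s⟧ ≠ c ⟦t⟧) : USep ep1 ep2 (uvcut ep1 ep2 (colourSet ep1 ep2 F c)) s t := by
  apply usep_uvcut_of_not_iff
  simpa [colourSet] using h

end Components

lemma two_mul_card_filter_ne {α : Type*} [Fintype α] [DecidableEq α] {x y : α} (hxy : x ≠ y) :
    2 * #{b : α → Bool | b x ≠ b y} = Fintype.card (α → Bool) := by
  let flip : (α → Bool) → (α → Bool) := fun b => Function.update b x (!b x)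
  have hflip : ∀ b, flip (flip b) = b := fun b => by simp [flip]
  have hcard : #{b : α → Bool | b x ≠ b y} = #{b : α → Bool | ¬b x ≠ b y} :=
    Finset.card_nbij' flip flip
      (fun b hb => by simp_all [flip, Function.update_of_ne hxy.symm, Bool.eq_not_iff])
      (fun b hb => by simp_all [flip, Function.update_of_ne hxy.symm])
      (fun b _ => hflip b) (fun b _ => hflip b)
  rw [two_mul, ← Finset.card_univ]
  nth_rewrite 2 [hcard]
  exact Finset.card_filter_add_card_filter_not _

namespace UPolyNet

variable {V E : Type} [Fintype V] [Fintype E] [DecidableEq V] [DecidableEq E]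

/-- The cost `Σ_v ρ_v(g⁻¹(v))` of the assignment `g` of the edges of `F` to nodes. -/
def assignCost (N : UPolyNet V E) (F : Finset E) (g : E → V) : ℝ :=
  ∑ v : V, N.rho v ((N.incE v ∩ F).filter (fun e => g e = v))

lemma assignCost_nonneg (N : UPolyNet V E) (F : Finset E) (g : E → V) :
    0 ≤ N.assignCost F g :=
  Finset.sum_nonneg fun v _ =>
    N.rho_nonneg v _ ((Finset.filter_subset _ _).trans Finset.inter_subset_left)

lemma assignCost_mono (N : UPolyNet V E) {F' F : Finset E} (h : F' ⊆ F) (g : E → V) :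
    N.assignCost F' g ≤ N.assignCost F g :=
  Finset.sum_le_sum fun v _ => N.rho_mono v _ _
    (Finset.filter_subset_filter _ (Finset.inter_subset_inter le_rfl h))
    ((Finset.filter_subset _ _).trans Finset.inter_subset_left)

lemma cutCost_le_assignCost (N : UPolyNet V E) {F : Finset E} {g : E → V}
    (hg : ∀ e ∈ F, g e = N.ep1 e ∨ g e = N.ep2 e) : N.cutCost F ≤ N.assignCost F g :=
  csInf_le ⟨0, fun _ ⟨g', _, hc⟩ => hc ▸ N.assignCost_nonneg F g'⟩ ⟨g, hg, rfl⟩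

lemma le_cutCost (N : UPolyNet V E) {F : Finset E} {a : ℝ}
    (h : ∀ g : E → V, (∀ e ∈ F, g e = N.ep1 e ∨ g e = N.ep2 e) →
      a ≤ N.assignCost F g) : a ≤ N.cutCost F :=
  le_csInf ⟨_, N.ep1, fun _ _ => Or.inl rfl, rfl⟩ fun _ ⟨g, hg, hc⟩ => hc ▸ h g hg

lemma cutCost_nonneg (N : UPolyNet V E) (F : Finset E) : 0 ≤ N.cutCost F :=
  N.le_cutCost fun g _ => N.assignCost_nonneg F g

lemma cutCost_mono (N : UPolyNet V E) {F' F : Finset E} (h : F' ⊆ F) :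
    N.cutCost F' ≤ N.cutCost F :=
  N.le_cutCost fun g hg =>
    (N.cutCost_le_assignCost fun e he => hg e (h he)).trans (N.assignCost_mono h g)

/-- A uniformly random colouring of the components of `G ∖ F` separates each pair that `F`
separates with probability `1/2`. -/
lemma card_mul_ite_usep_le (N : UPolyNet V E) (F : Finset E) (x y : V) {d : ℝ} (hd : 0 ≤ d) :
    (Fintype.card (Quotient (componentSetoid N.ep1 N.ep2 F) → Bool) : ℝ) *
        (if USep N.ep1 N.ep2 F x y then d else 0) ≤
      2 * ∑ c, if USep N.ep1 N.ep2 (uvcut N.ep1 N.ep2 (colourSet N.ep1 N.ep2 F c)) x y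
        then d else 0 := by
  have hsum_nonneg : 0 ≤ ∑ c : Quotient (componentSetoid N.ep1 N.ep2 F) → Bool,
      if USep N.ep1 N.ep2 (uvcut N.ep1 N.ep2 (colourSet N.ep1 N.ep2 F c)) x y then d else 0 :=
    Finset.sum_nonneg fun _ _ => by split_ifs <;> simp [hd]
  split_ifs with hsep
  · rw [← two_mul_card_filter_ne (mk_ne_mk_of_usep hsep), Nat.cast_mul, Nat.cast_two,
      mul_assoc, ← nsmul_eq_mul, ← Finset.sum_const, Finset.sum_filter]
    gcongr with c
    split_ifs with hc hc'
    · exact le_rfl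
    · exact absurd (usep_uvcut_colourSet hc) hc'
    · exact hd
    · exact le_rfl
  · simpa using hsum_nonneg

lemma exists_colourSet_sepDemand_ge (N : UPolyNet V E) {ι : Type} [Fintype ι] (s t : ι → V)
    {D : ι → ℝ} (hD : ∀ i, 0 ≤ D i) (F : Finset E) :
    ∃ c : Quotient (componentSetoid N.ep1 N.ep2 F) → Bool,
      N.sepDemand s t D F ≤
        2 * N.sepDemand s t D (uvcut N.ep1 N.ep2 (colourSet N.ep1 N.ep2 F c)) := by
  obtain ⟨c, -, hc⟩ := Finset.exists_le_of_sum_le Finset.univ_nonempty <| calc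
    ∑ _c, N.sepDemand s t D F
      = ∑ i, (Fintype.card (Quotient (componentSetoid N.ep1 N.ep2 F) → Bool) : ℝ) *
          (if USep N.ep1 N.ep2 F (s i) (t i) then D i else 0) := by
        rw [Finset.sum_const, nsmul_eq_mul, sepDemand, Finset.mul_sum, Finset.card_univ]
    _ ≤ ∑ i, 2 * ∑ c, if USep N.ep1 N.ep2 (uvcut N.ep1 N.ep2 (colourSet N.ep1 N.ep2 F c))
          (s i) (t i) then D i else 0 :=
        Finset.sum_le_sum fun i _ => N.card_mul_ite_usep_le F (s i) (t i) (hD i)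
    _ = ∑ c, 2 * N.sepDemand s t D (uvcut N.ep1 N.ep2 (colourSet N.ep1 N.ep2 F c)) := by
        simp only [sepDemand, ← Finset.mul_sum]
        rw [Finset.sum_comm]
  exact ⟨c, hc⟩

end UPolyNet

/-- In an undirected polymatroidal network with source-sink pairs
`(s i, t i)` and demands `D i ≥ 0`, for every edge set `F` with `D(F) > 0` there is a
bi-partition cut `δ(S)` whose sparsity is at most twice the sparsity of `F`. -/
theorem bipartition_cut_sparsity {V E : Type} [Fintype V] [Fintype E]
    [DecidableEq V] [DecidableEq E] (N : UPolyNet V E) {k : ℕ}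
    (s t : Fin k → V) (D : Fin k → ℝ) (hD : ∀ i, 0 ≤ D i)
    (F : Finset E) (hF : 0 < N.sepDemand s t D F) :
    ∃ S : Finset V, 0 < N.sepDemand s t D (uvcut N.ep1 N.ep2 S) ∧
      N.cutCost (uvcut N.ep1 N.ep2 S) / N.sepDemand s t D (uvcut N.ep1 N.ep2 S) ≤
        2 * (N.cutCost F / N.sepDemand s t D F) := by
  obtain ⟨c, hc⟩ := N.exists_colourSet_sepDemand_ge s t hD F
  have hS := uvcut_colourSet_subset c
  refine ⟨colourSet N.ep1 N.ep2 F c, by linarith, ?_⟩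
  calc N.cutCost (uvcut N.ep1 N.ep2 (colourSet N.ep1 N.ep2 F c)) /
        N.sepDemand s t D (uvcut N.ep1 N.ep2 (colourSet N.ep1 N.ep2 F c))
      ≤ N.cutCost F / (N.sepDemand s t D F / 2) :=
        div_le_div₀ (N.cutCost_nonneg F) (N.cutCost_mono hS) (by linarith) (by linarith)
    _ = 2 * (N.cutCost F / N.sepDemand s t D F) := by ring
end
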